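/- In C^{⊗3} one has [(∂⊗1⊗1 + 1⊗∂⊗1 + 1⊗1⊗∂) ∘ Δ_3 + (−Δ_2⊗1 + 1⊗Δ_2) ∘ Δ_2](P) = 0, where the maps 1⊗∂⊗1 and 1⊗1⊗∂ are evaluated with the Koszul sign convention; i.e. Δ_3 is a chain homotopy between (Δ_2⊗1)Δ_2 and (1⊗Δ_2)Δ_2 evaluated at the 2-cell P. -/

import Mathlib

noncomputable section

/-- Cells of an `n`-gon: `v i` models the vertex `v_{i+1}`, `e i` models the edge `e_{i+1}`
(so indices are 0-based), and `F` models the 2-cell `P`. -/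
inductive Cell (n : ℕ) : Type where
  | v : Fin n → Cell n
  | e : Fin n → Cell n
  | F : Cell n
deriving DecidableEq

/-- `Tens R n k` models `C^{⊗ k}`, the free `R`-module on `k`-tuples of cells. -/
abbrev Tens (R : Type) [CommRing R] (n k : ℕ) : Type := (Fin k → Cell n) →₀ R

/-- The basis tensor corresponding to a tuple of cells. -/
def bt (R : Type) [CommRing R] {n k : ℕ} (x : Fin k → Cell n) : Tens R n k :=
  Finsupp.single x 1

/-- Degree of a cell. -/
def degC {n : ℕ} : Cell n → ℕ
  | .v _ => 0
  | .e _ => 1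
  | .F => 2

/-- `(-1)^m` in `R`. -/
def sgn (R : Type) [CommRing R] (m : ℤ) : R := if Even m then 1 else -1

/-- The boundary operator on basis cells: `∂(v_i) = 0`, `∂(e_i) = v_{i+1} - v_i` for `i < n`,
`∂(e_n) = v_n - v_1`, `∂(P) = e_1 + ⋯ + e_{n-1} - e_n`. -/
def dB (R : Type) [CommRing R] (n : ℕ) : Cell n → Tens R n 1
  | .v _ => 0
  | .e i =>
      if h : (i : ℕ) + 1 < n then
        bt R (fun _ => Cell.v ⟨(i : ℕ) + 1, h⟩) - bt R (fun _ => Cell.v i)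
      else
        bt R (fun _ => Cell.v i) - bt R (fun _ => Cell.v ⟨0, i.pos⟩)
  | .F => ∑ i : Fin n, (if (i : ℕ) + 1 < n then (1 : R) else -1) • bt R (fun _ => Cell.e i)

/-- `Σ_{0<i_1<⋯<i_k<n} e_{i_1} ⊗ ⋯ ⊗ e_{i_k}` (with 0-based indices: strictly increasing
tuples of edge indices all `< n-1`). -/
def esum (R : Type) [CommRing R] (n k : ℕ) : Tens R n k :=
  ∑ f : Fin k → Fin n,
    if (∀ p q : Fin k, p < q → f p < f q) ∧ (∀ p : Fin k, ((f p) : ℕ) + 1 < n) then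
      bt R (fun p => Cell.e (f p))
    else 0

/-- The `A_∞`-coalgebra operations on basis cells: `DeltaB R n 2` is the Kravatz diagonal
`Δ₂` and for `k ≥ 3`, `DeltaB R n k` is `Δ_k`, which vanishes on vertices and edges and sends
`P` to `Σ_{0<i_1<⋯<i_k<n} e_{i_1} ⊗ ⋯ ⊗ e_{i_k}`. -/
def DeltaB (R : Type) [CommRing R] (n : ℕ) (k : ℕ) : Cell n → Tens R n k
  | .v i => if k = 2 then bt R (fun _ => Cell.v i) else 0
  | .e i =>
      if k = 2 then
        if h : (i : ℕ) + 1 < n then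
          bt R (fun p => if (p : ℕ) = 0 then Cell.v i else Cell.e i) +
            bt R (fun p => if (p : ℕ) = 0 then Cell.e i else Cell.v ⟨(i : ℕ) + 1, h⟩)
        else
          bt R (fun p => if (p : ℕ) = 0 then Cell.v ⟨0, i.pos⟩ else Cell.e i) +
            bt R (fun p => if (p : ℕ) = 0 then Cell.e i else Cell.v i)
      else 0
  | .F =>
      esum R n k +
        (if h : k = 2 ∧ 0 < n then
          bt R (fun p => if (p : ℕ) = 0 then Cell.v ⟨0, h.2⟩ else Cell.F) +
            bt R (fun p => if (p : ℕ) = 0 then Cell.F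
                  else Cell.v ⟨n - 1, Nat.sub_lt h.2 Nat.one_pos⟩)
        else 0)

/-- Extension of a map defined on basis tensors to a linear map. -/
def lext (R : Type) [CommRing R] (n : ℕ) {k m : ℕ} (φ : (Fin k → Cell n) → Tens R n m) :
    Tens R n k →ₗ[R] Tens R n m :=
  Finsupp.linearCombination R φ

/-- Splicing a `j`-tuple into a `k`-tuple at position `a`, producing an `m`-tuple
(meaningful when `m = k + j - 1` and `a < k`). -/
def splice {n k j : ℕ} (m a : ℕ) (x : Fin k → Cell n) (y : Fin j → Cell n) :
    Fin m → Cell n := fun q =>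
  if h1 : (q : ℕ) < a ∧ (q : ℕ) < k then x ⟨q, h1.2⟩
  else if h2 : a ≤ (q : ℕ) ∧ (q : ℕ) - a < j then y ⟨(q : ℕ) - a, h2.2⟩
  else if h3 : (q : ℕ) + 1 - j < k then x ⟨(q : ℕ) + 1 - j, h3⟩
  else Cell.F

/-- `opp R n k m j a p g` is the linear map `1^{⊗a} ⊗ g ⊗ 1^{⊗(k-1-a)} : C^{⊗k} → C^{⊗m}`
(meaningful when `m = k + j - 1`), where `g` is the basis-level description of an operation
`C → C^{⊗j}` of degree `p`, evaluated with the Koszul sign convention. -/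
def opp (R : Type) [CommRing R] (n : ℕ) (k m j a : ℕ) (p : ℤ) (g : Cell n → Tens R n j) :
    Tens R n k →ₗ[R] Tens R n m :=
  lext R n fun x =>
    if ha : a < k then
      sgn R (p * ∑ q : Fin k, if (q : ℕ) < a then (degC (x q) : ℤ) else 0) •
        Finsupp.mapDomain (splice m a x) (g (x ⟨a, ha⟩))
    else 0

/-- `Δ_k` as a linear map `C → C^{⊗k}`. -/
def Dmap (R : Type) [CommRing R] (n k : ℕ) : Tens R n 1 →ₗ[R] Tens R n k :=
  lext R n fun x => DeltaB R n k (x 0)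

/-- The boundary `∂` as a linear map `C → C`. -/
def bdry (R : Type) [CommRing R] (n : ℕ) : Tens R n 1 →ₗ[R] Tens R n 1 :=
  lext R n fun x => dB R n (x 0)

/-- The top cell `P` as a chain. -/
def cellP (R : Type) [CommRing R] (n : ℕ) : Tens R n 1 := bt R (fun _ => Cell.F)

end

/-!
Write `Δ₃(P)` as the sum of `e_i ⊗ e_j ⊗ e_k` over `i < j < k < n - 1` (0-based indices).
Applying `∂` in one tensor factor replaces that edge by a difference of consecutive vertices, so
each of the three sums telescopes in the index of that factor and leaves a sum over pairs
`a < b < n - 1` of its two endpoint terms. The inner endpoints `v_a ⊗ e_a ⊗ e_b`,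
`e_a ⊗ v_{a+1} ⊗ e_b`, `e_a ⊗ v_b ⊗ e_b`, `e_a ⊗ e_b ⊗ v_{b+1}` are what `Δ₂ ⊗ 1` and `1 ⊗ Δ₂`
produce from the edge part of `Δ₂(P)`; the outer ones `v_0 ⊗ e_a ⊗ e_b` and
`e_a ⊗ e_b ⊗ v_{n-1}` are what they produce from `v_0 ⊗ P` and `P ⊗ v_{n-1}`, whose remaining
terms cancel in pairs.
-/

open Finset

section IteratedSums

variable {M : Type*}

def pairSum [AddCommMonoid M] (m : ℕ) (F : ℕ → ℕ → M) : M :=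
  ∑ j ∈ range m, ∑ i ∈ range j, F i j

def tripleSum [AddCommMonoid M] (m : ℕ) (G : ℕ → ℕ → ℕ → M) : M :=
  ∑ k ∈ range m, ∑ j ∈ range k, ∑ i ∈ range j, G i j k

section AddCommMonoid

variable [AddCommMonoid M] {m : ℕ}

lemma pairSum_congr {F F' : ℕ → ℕ → M} (h : ∀ i j, i < j → j < m → F i j = F' i j) :
    pairSum m F = pairSum m F' :=
  sum_congr rfl fun j hj => sum_congr rfl fun i hi => h i j (mem_range.1 hi) (mem_range.1 hj)

lemma tripleSum_congr {G G' : ℕ → ℕ → ℕ → M}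
    (h : ∀ i j k, i < j → j < k → k < m → G i j k = G' i j k) :
    tripleSum m G = tripleSum m G' :=
  sum_congr rfl fun k hk => sum_congr rfl fun j hj => sum_congr rfl fun i hi =>
    h i j k (mem_range.1 hi) (mem_range.1 hj) (mem_range.1 hk)

lemma pairSum_add (F F' : ℕ → ℕ → M) :
    pairSum m (fun i j => F i j + F' i j) = pairSum m F + pairSum m F' := by
  simp only [pairSum, sum_add_distrib]

lemma map_pairSum {N FH : Type*} [AddCommMonoid N] [FunLike FH M N] [AddMonoidHomClass FH M N]
    (φ : FH) (F : ℕ → ℕ → M) : φ (pairSum m F) = pairSum m fun i j => φ (F i j) := by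
  simp only [pairSum, map_sum]

lemma map_tripleSum {N FH : Type*} [AddCommMonoid N] [FunLike FH M N] [AddMonoidHomClass FH M N]
    (φ : FH) (G : ℕ → ℕ → ℕ → M) :
    φ (tripleSum m G) = tripleSum m fun i j k => φ (G i j k) := by
  simp only [tripleSum, map_sum]

lemma mapDomain_pairSum {α β : Type*} (f : α → β) (F : ℕ → ℕ → α →₀ M) :
    Finsupp.mapDomain f (pairSum m F) = pairSum m fun i j => Finsupp.mapDomain f (F i j) :=
  map_pairSum (Finsupp.mapDomain.addMonoidHom f) F

lemma sum_range_sum_range_comm (k : ℕ) (f : ℕ → ℕ → M) :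
    ∑ j ∈ range k, ∑ i ∈ range j, f i j = ∑ i ∈ range k, ∑ j ∈ Ico (i + 1) k, f i j := by
  simpa only [range_eq_Ico] using (sum_Ico_Ico_comm' 0 k f).symm

lemma sum_range_eq_sum_fin {b n : ℕ} (h : b ≤ n) (f : ℕ → M) :
    ∑ a ∈ range b, f a = ∑ a : Fin n, if (a : ℕ) < b then f a else 0 := by
  rw [Fin.sum_univ_eq_sum_range (fun a => if a < b then f a else 0), ← sum_filter]
  congr 1
  ext
  simp only [mem_range, mem_filter]
  omega

lemma sum_range_val_eq_sum_fin {n : ℕ} (b : Fin n) (f : ℕ → M) :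
    ∑ a ∈ range b, f a = ∑ a : Fin n, if (a : ℕ) < b then f a else 0 :=
  sum_range_eq_sum_fin b.is_le' f

lemma sum_fin_two_arrow {α : Type*} [Fintype α] (W : (Fin 2 → α) → M) :
    ∑ f, W f = ∑ b, ∑ a, W ![a, b] := by
  simp only [← (Fin.snocEquiv fun _ => α).sum_comp, Fintype.sum_prod_type, Fintype.sum_unique]
  congr! with b a
  ext i; fin_cases i <;> rfl

lemma sum_fin_three_arrow {α : Type*} [Fintype α] (W : (Fin 3 → α) → M) :
    ∑ f, W f = ∑ c, ∑ b, ∑ a, W ![a, b, c] := by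
  simp only [← (Fin.snocEquiv fun _ => α).sum_comp, Fintype.sum_prod_type, Fintype.sum_unique]
  congr! with c b a
  ext i; fin_cases i <;> rfl

lemma pairSum_eq_sum_strictMono {n : ℕ} (F : ℕ → ℕ → M) :
    pairSum (n - 1) F = ∑ f : Fin 2 → Fin n,
      if (∀ p q, p < q → f p < f q) ∧ ∀ p, (f p : ℕ) + 1 < n then F (f 0) (f 1) else 0 := by
  have hcond (a b : Fin n) : ((∀ p q, p < q → ![a, b] p < ![a, b] q) ∧
      ∀ p, (![a, b] p : ℕ) + 1 < n) ↔ (b : ℕ) < n - 1 ∧ (a : ℕ) < b := by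
    simp only [Fin.forall_fin_two, Matrix.cons_val_zero, Matrix.cons_val_one, Fin.lt_def,
      Fin.val_zero, Fin.val_one]
    omega
  rw [sum_fin_two_arrow, pairSum, sum_range_eq_sum_fin (n.sub_le 1)]
  simp only [sum_range_val_eq_sum_fin, hcond, ite_and, sum_ite_irrel, sum_const_zero]
  rfl

lemma tripleSum_eq_sum_strictMono {n : ℕ} (G : ℕ → ℕ → ℕ → M) :
    tripleSum (n - 1) G = ∑ f : Fin 3 → Fin n,
      if (∀ p q, p < q → f p < f q) ∧ ∀ p, (f p : ℕ) + 1 < n then G (f 0) (f 1) (f 2)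
      else 0 := by
  have hcond (a b c : Fin n) : ((∀ p q, p < q → ![a, b, c] p < ![a, b, c] q) ∧
      ∀ p, (![a, b, c] p : ℕ) + 1 < n) ↔ (c : ℕ) < n - 1 ∧ (b : ℕ) < c ∧ (a : ℕ) < b := by
    simp only [Fin.forall_fin_succ, IsEmpty.forall_iff, and_true, Matrix.cons_val_zero,
      Matrix.cons_val_succ, Fin.lt_def, Fin.val_succ, Fin.val_zero]
    omega
  rw [sum_fin_three_arrow, tripleSum, sum_range_eq_sum_fin (n.sub_le 1)]
  simp only [sum_range_val_eq_sum_fin, hcond, ite_and, sum_ite_irrel, sum_const_zero]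
  rfl

end AddCommMonoid

section AddCommGroup

variable [AddCommGroup M] {m : ℕ}

lemma pairSum_sub (F F' : ℕ → ℕ → M) :
    pairSum m (fun i j => F i j - F' i j) = pairSum m F - pairSum m F' := by
  simp only [pairSum, sum_sub_distrib]

lemma tripleSum_neg (G : ℕ → ℕ → ℕ → M) :
    tripleSum m (fun i j k => -G i j k) = -tripleSum m G := by
  simp only [tripleSum, sum_neg_distrib]

lemma tripleSum_sub_left (G : ℕ → ℕ → ℕ → M) :
    tripleSum m (fun i j k => G (i + 1) j k - G i j k) =
      pairSum m fun j k => G j j k - G 0 j k :=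
  sum_congr rfl fun k _ => sum_congr rfl fun j _ => sum_range_sub (G · j k) j

lemma tripleSum_sub_mid (G : ℕ → ℕ → ℕ → M) :
    tripleSum m (fun i j k => G i (j + 1) k - G i j k) =
      pairSum m fun i k => G i k k - G i (i + 1) k := by
  refine sum_congr rfl fun k _ => ?_
  rw [sum_range_sum_range_comm]
  exact sum_congr rfl fun i hi => sum_Ico_sub (G i · k) (mem_range.1 hi)

lemma tripleSum_sub_right (G : ℕ → ℕ → ℕ → M) :
    tripleSum m (fun i j k => G i j (k + 1) - G i j k) =
      pairSum m fun i j => G i j m - G i j (j + 1) := by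
  rw [tripleSum, sum_range_sum_range_comm]
  refine sum_congr rfl fun j hj => ?_
  rw [sum_comm]
  exact sum_congr rfl fun i _ => sum_Ico_sub (G i j ·) (mem_range.1 hj)

end AddCommGroup

end IteratedSums

lemma fin_two_ite_eq {α : Type*} (a b : α) :
    (fun p : Fin 2 => if p = 0 then a else b) = ![a, b] := by
  funext p; fin_cases p <;> rfl

lemma fin_two_const_eq {α : Type*} (a : α) : (fun _ : Fin 2 => a) = ![a, a] := by
  funext p; fin_cases p <;> rfl

section Polygon

variable {R : Type} [CommRing R] {n : ℕ}

-- Out-of-range indices `i ≥ n` give the junk value `.F`.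
def vert (n i : ℕ) : Cell n := if h : i < n then .v ⟨i, h⟩ else .F

def edge (n i : ℕ) : Cell n := if h : i < n then .e ⟨i, h⟩ else .F

lemma edge_val (i : Fin n) : edge n i = .e i := dif_pos i.isLt

lemma degC_edge {i : ℕ} (h : i < n) : degC (edge n i) = 1 := by
  simp [edge, h, degC]

lemma lext_bt {k m : ℕ} (φ : (Fin k → Cell n) → Tens R n m) (x : Fin k → Cell n) :
    lext R n φ (bt R x) = φ x := by
  simp [lext, bt]

lemma Dmap_cellP (k : ℕ) : Dmap R n k (cellP R n) = DeltaB R n k .F :=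
  lext_bt _ _

lemma opp_bt {k m j a : ℕ} (ha : a < k) (p : ℤ) (g : Cell n → Tens R n j)
    (x : Fin k → Cell n) :
    opp R n k m j a p g (bt R x) =
      sgn R (p * ∑ q : Fin k, if (q : ℕ) < a then (degC (x q) : ℤ) else 0) •
        Finsupp.mapDomain (splice m a x) (g (x ⟨a, ha⟩)) := by
  rw [opp, lext_bt, dif_pos ha]

lemma splice_triple_zero (a b c d : Cell n) :
    splice 3 0 ![a, b, c] (fun _ : Fin 1 => d) = ![d, b, c] := by
  funext q; fin_cases q <;> rfl

lemma splice_triple_one (a b c d : Cell n) :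
    splice 3 1 ![a, b, c] (fun _ : Fin 1 => d) = ![a, d, c] := by
  funext q; fin_cases q <;> rfl

lemma splice_triple_two (a b c d : Cell n) :
    splice 3 2 ![a, b, c] (fun _ : Fin 1 => d) = ![a, b, d] := by
  funext q; fin_cases q <;> rfl

lemma splice_pair_zero (a b c d : Cell n) : splice 3 0 ![a, b] ![c, d] = ![c, d, b] := by
  funext q; fin_cases q <;> rfl

lemma splice_pair_one (a b c d : Cell n) : splice 3 1 ![a, b] ![c, d] = ![a, c, d] := by
  funext q; fin_cases q <;> rfl

lemma esum_two : esum R n 2 = pairSum (n - 1) fun a b => bt R ![edge n a, edge n b] := by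
  rw [pairSum_eq_sum_strictMono, esum]
  congr! with f _ _ p
  fin_cases p <;> simp [edge_val]

lemma esum_three :
    esum R n 3 = tripleSum (n - 1) fun a b c => bt R ![edge n a, edge n b, edge n c] := by
  rw [tripleSum_eq_sum_strictMono, esum]
  congr! with f _ _ p
  fin_cases p <;> simp [edge_val]

lemma dB_edge {i : ℕ} (h : i + 1 < n) :
    dB R n (edge n i) = bt R (fun _ => vert n (i + 1)) - bt R (fun _ => vert n i) := by
  simp [dB, edge, vert, h, show i < n by omega]

lemma DeltaB_two_vert {i : ℕ} (h : i < n) :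
    DeltaB R n 2 (vert n i) = bt R ![vert n i, vert n i] := by
  simp [DeltaB, vert, h, fin_two_const_eq]

lemma DeltaB_two_edge {i : ℕ} (h : i + 1 < n) :
    DeltaB R n 2 (edge n i) = bt R ![vert n i, edge n i] + bt R ![edge n i, vert n (i + 1)] := by
  simp [DeltaB, edge, vert, h, show i < n by omega, fin_two_ite_eq]

lemma DeltaB_two_F (h : 0 < n) :
    DeltaB R n 2 .F = pairSum (n - 1) (fun a b => bt R ![edge n a, edge n b]) +
      (bt R ![vert n 0, .F] + bt R ![.F, vert n (n - 1)]) := by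
  simp [DeltaB, vert, h, esum_two, fin_two_ite_eq]

lemma DeltaB_three_F :
    DeltaB R n 3 .F = tripleSum (n - 1) fun a b c => bt R ![edge n a, edge n b, edge n c] := by
  simp [DeltaB, esum_three]

lemma opp_dB_zero_edgeTriples :
    opp R n 3 3 1 0 (-1) (dB R n)
        (tripleSum (n - 1) fun i j k => bt R ![edge n i, edge n j, edge n k]) =
      pairSum (n - 1) fun j k =>
        bt R ![vert n j, edge n j, edge n k] - bt R ![vert n 0, edge n j, edge n k] := by
  rw [map_tripleSum, ← tripleSum_sub_left fun i j k => bt R ![vert n i, edge n j, edge n k]]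
  refine tripleSum_congr fun i j k _ _ _ => ?_
  rw [opp_bt (by norm_num)]
  simp [dB_edge (show i + 1 < n by omega), sgn, bt, Finsupp.mapDomain_sub, splice_triple_zero]

lemma opp_dB_one_edgeTriples :
    opp R n 3 3 1 1 (-1) (dB R n)
        (tripleSum (n - 1) fun i j k => bt R ![edge n i, edge n j, edge n k]) =
      -pairSum (n - 1) fun i k =>
        bt R ![edge n i, vert n k, edge n k] - bt R ![edge n i, vert n (i + 1), edge n k] := by
  rw [map_tripleSum, ← tripleSum_sub_mid fun i j k => bt R ![edge n i, vert n j, edge n k],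
    ← tripleSum_neg]
  refine tripleSum_congr fun i j k _ _ _ => ?_
  rw [opp_bt (by norm_num)]
  simp [dB_edge (show j + 1 < n by omega), sgn, bt, Finsupp.mapDomain_sub, splice_triple_one,
    degC_edge (show i < n by omega)]

lemma opp_dB_two_edgeTriples :
    opp R n 3 3 1 2 (-1) (dB R n)
        (tripleSum (n - 1) fun i j k => bt R ![edge n i, edge n j, edge n k]) =
      pairSum (n - 1) fun i j =>
        bt R ![edge n i, edge n j, vert n (n - 1)] -
          bt R ![edge n i, edge n j, vert n (j + 1)] := by
  rw [map_tripleSum, ← tripleSum_sub_right fun i j k => bt R ![edge n i, edge n j, vert n k]]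
  refine tripleSum_congr fun i j k _ _ _ => ?_
  rw [opp_bt (by norm_num)]
  simp [dB_edge (show k + 1 < n by omega), sgn, bt, Finsupp.mapDomain_sub, splice_triple_two,
    degC_edge (show i < n by omega), degC_edge (show j < n by omega), Fin.sum_univ_three]

lemma opp_DeltaB_zero_edgePairs :
    opp R n 2 3 2 0 0 (DeltaB R n 2) (pairSum (n - 1) fun a b => bt R ![edge n a, edge n b]) =
      pairSum (n - 1) fun a b =>
        bt R ![vert n a, edge n a, edge n b] + bt R ![edge n a, vert n (a + 1), edge n b] := by
  rw [map_pairSum]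
  refine pairSum_congr fun a b _ _ => ?_
  rw [opp_bt (by norm_num)]
  simp [DeltaB_two_edge (show a + 1 < n by omega), sgn, bt, Finsupp.mapDomain_add,
    splice_pair_zero]

lemma opp_DeltaB_one_edgePairs :
    opp R n 2 3 2 1 0 (DeltaB R n 2) (pairSum (n - 1) fun a b => bt R ![edge n a, edge n b]) =
      pairSum (n - 1) fun a b =>
        bt R ![edge n a, vert n b, edge n b] + bt R ![edge n a, edge n b, vert n (b + 1)] := by
  rw [map_pairSum]
  refine pairSum_congr fun a b _ _ => ?_
  rw [opp_bt (by norm_num)]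
  simp [DeltaB_two_edge (show b + 1 < n by omega), sgn, bt, Finsupp.mapDomain_add,
    splice_pair_one]

lemma opp_DeltaB_zero_vert_F (h : 0 < n) :
    opp R n 2 3 2 0 0 (DeltaB R n 2) (bt R ![vert n 0, .F]) = bt R ![vert n 0, vert n 0, .F] := by
  rw [opp_bt (by norm_num)]
  simp [DeltaB_two_vert h, sgn, bt, splice_pair_zero]

lemma opp_DeltaB_one_vert_F (h : 0 < n) :
    opp R n 2 3 2 1 0 (DeltaB R n 2) (bt R ![vert n 0, .F]) =
      pairSum (n - 1) (fun a b => bt R ![vert n 0, edge n a, edge n b]) +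
        (bt R ![vert n 0, vert n 0, .F] + bt R ![vert n 0, .F, vert n (n - 1)]) := by
  rw [opp_bt (by norm_num)]
  simp [DeltaB_two_F h, sgn, bt, Finsupp.mapDomain_add, mapDomain_pairSum, splice_pair_one]

lemma opp_DeltaB_zero_F_vert (h : 0 < n) :
    opp R n 2 3 2 0 0 (DeltaB R n 2) (bt R ![.F, vert n (n - 1)]) =
      pairSum (n - 1) (fun a b => bt R ![edge n a, edge n b, vert n (n - 1)]) +
        (bt R ![vert n 0, .F, vert n (n - 1)] + bt R ![.F, vert n (n - 1), vert n (n - 1)]) := by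
  rw [opp_bt (by norm_num)]
  simp [DeltaB_two_F h, sgn, bt, Finsupp.mapDomain_add, mapDomain_pairSum, splice_pair_zero]

lemma opp_DeltaB_one_F_vert (h : 0 < n) :
    opp R n 2 3 2 1 0 (DeltaB R n 2) (bt R ![.F, vert n (n - 1)]) =
      bt R ![.F, vert n (n - 1), vert n (n - 1)] := by
  rw [opp_bt (by norm_num)]
  simp [DeltaB_two_vert (show n - 1 < n by omega), sgn, bt, splice_pair_one]

end Polygon

/-- In `C^{⊗3}` one has
`[(∂⊗1⊗1 + 1⊗∂⊗1 + 1⊗1⊗∂) ∘ Δ₃ + (−Δ₂⊗1 + 1⊗Δ₂) ∘ Δ₂](P) = 0`, the tensor products of maps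
being evaluated with the Koszul sign convention: `Δ₃` is a chain homotopy between `(Δ₂⊗1)Δ₂`
and `(1⊗Δ₂)Δ₂` evaluated at the 2-cell `P`. -/
theorem delta3_homotopy (R : Type) [CommRing R] (n : ℕ) (hn : 3 ≤ n) :
    ((opp R n 3 3 1 0 (-1) (dB R n) + opp R n 3 3 1 1 (-1) (dB R n) +
        opp R n 3 3 1 2 (-1) (dB R n)) ((Dmap R n 3) (cellP R n))) +
      ((-(opp R n 2 3 2 0 0 (DeltaB R n 2)) + opp R n 2 3 2 1 0 (DeltaB R n 2))
        ((Dmap R n 2) (cellP R n))) = 0 := by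
  have hn0 : 0 < n := by omega
  rw [Dmap_cellP, Dmap_cellP, DeltaB_three_F, DeltaB_two_F hn0]
  simp only [LinearMap.add_apply, LinearMap.neg_apply, map_add, opp_dB_zero_edgeTriples,
    opp_dB_one_edgeTriples, opp_dB_two_edgeTriples, opp_DeltaB_zero_edgePairs,
    opp_DeltaB_one_edgePairs, opp_DeltaB_zero_vert_F hn0, opp_DeltaB_one_vert_F hn0,
    opp_DeltaB_zero_F_vert hn0, opp_DeltaB_one_F_vert hn0, pairSum_add, pairSum_sub]
  abel
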